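/- Let R be a Dedekind domain in which every ideal class contains a nonzero prime ideal. Then R is half-factorial if and only if its ideal class group has at most 2 elements. -/

import Mathlib

open UniqueFactorizationMonoid nonZeroDivisors

namespace CarlitzAux

variable {R : Type*} [CommRing R] [IsDomain R] [IsDedekindDomain R]

/-- The class of a nonzero ideal. -/
noncomputable def cls (I : Ideal R) (hI : I ≠ 0) : ClassGroup R :=
  ClassGroup.mk0 ⟨I, mem_nonZeroDivisors_of_ne_zero hI⟩

lemma cls_mul (I J : Ideal R) (hI : I ≠ 0) (hJ : J ≠ 0) :
    cls (I * J) (mul_ne_zero hI hJ) = cls I hI * cls J hJ :=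
by
  have h : (⟨I * J, mem_nonZeroDivisors_of_ne_zero (mul_ne_zero hI hJ)⟩ : (Ideal R)⁰) =
      ⟨I, mem_nonZeroDivisors_of_ne_zero hI⟩ * ⟨J, mem_nonZeroDivisors_of_ne_zero hJ⟩ :=
    Subtype.ext rfl
  unfold cls
  rw [h, MonoidHom.map_mul]

lemma cls_eq_one_iff (I : Ideal R) (hI : I ≠ 0) : cls I hI = 1 ↔ I.IsPrincipal :=
  ClassGroup.mk0_eq_one_iff _

/-- A principal factorization of a product of two nonprincipal primes is trivial. -/
lemma key2 {P Q U V : Ideal R} (hP : Prime P) (hQ : Prime Q)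
    (hPp : ¬P.IsPrincipal) (hQp : ¬Q.IsPrincipal)
    (hU : U.IsPrincipal) (hV : V.IsPrincipal) (h : U * V = P * Q) :
    U = ⊤ ∨ V = ⊤ := by
  have hmain : ∀ U V : Ideal R, U.IsPrincipal → V.IsPrincipal → U * V = P * Q → P ∣ U →
      U = ⊤ ∨ V = ⊤ := by
    intro U V hU hV h hd
    obtain ⟨U', rfl⟩ := hd
    have hQ' : U' * V = Q := by
      refine mul_left_cancel₀ hP.ne_zero ?_
      rw [← mul_assoc, h]
    rcases hQ.irreducible.isUnit_or_isUnit hQ'.symm with h' | h'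
    · exfalso
      apply hPp
      rw [Ideal.isUnit_iff] at h'
      rwa [h', Ideal.mul_top] at hU
    · exact Or.inr (Ideal.isUnit_iff.mp h')
  rcases hP.2.2 U V (by rw [h]; exact dvd_mul_right P Q) with hd | hd
  · exact hmain U V hU hV h hd
  · exact (hmain V U hV hU (by rwa [mul_comm]) hd).symm

lemma key3 {P Q S U V : Ideal R} (hP : Prime P) (hQ : Prime Q) (hS : Prime S)
    (hPp : ¬P.IsPrincipal) (hQp : ¬Q.IsPrincipal) (hSp : ¬S.IsPrincipal)
    (hU : U.IsPrincipal) (hV : V.IsPrincipal) (h : U * V = P * Q * S) :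
    U = ⊤ ∨ V = ⊤ := by
  have hmain : ∀ U V : Ideal R, U.IsPrincipal → V.IsPrincipal → U * V = P * Q * S → P ∣ U →
      U = ⊤ ∨ V = ⊤ := by
    intro U V hU hV h hd
    obtain ⟨U', rfl⟩ := hd
    have h1 : U' * V = Q * S := by
      refine mul_left_cancel₀ hP.ne_zero ?_
      rw [← mul_assoc, h, mul_assoc]
    rcases hQ.2.2 U' V (by rw [h1]; exact dvd_mul_right Q S) with hd' | hd'
    · obtain ⟨U'', rfl⟩ := hd'
      have h2 : U'' * V = S := by
        refine mul_left_cancel₀ hQ.ne_zero ?_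
        rw [← mul_assoc, h1]
      rcases hS.irreducible.isUnit_or_isUnit h2.symm with h' | h'
      · exfalso
        apply hSp
        rw [Ideal.isUnit_iff] at h'
        rw [h', Ideal.top_mul] at h2
        exact h2 ▸ hV
      · exact Or.inr (Ideal.isUnit_iff.mp h')
    · obtain ⟨V', rfl⟩ := hd'
      have h2 : U' * V' = S := by
        refine mul_left_cancel₀ hQ.ne_zero ?_
        rw [show Q * (U' * V') = U' * (Q * V') by ring, h1]
      rcases hS.irreducible.isUnit_or_isUnit h2.symm with h' | h'
      · exfalso
        apply hPp
        rw [Ideal.isUnit_iff] at h'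
        rwa [h', Ideal.mul_top] at hU
      · exfalso
        apply hQp
        rw [Ideal.isUnit_iff] at h'
        rwa [h', Ideal.mul_top] at hV
  rcases hP.2.2 U V (by rw [h]; exact dvd_mul_of_dvd_left (dvd_mul_right P Q) S) with hd | hd
  · exact hmain U V hU hV h hd
  · exact (hmain V U hV hU (by rwa [mul_comm]) hd).symm

lemma irred_of_span_eq {a : R} {I : Ideal R} (hI : Ideal.span {a} = I) (htop : I ≠ ⊤)
    (hkey : ∀ U V : Ideal R, U.IsPrincipal → V.IsPrincipal → U * V = I → U = ⊤ ∨ V = ⊤) :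
    Irreducible a := by
  constructor
  · intro ha
    exact htop (hI ▸ Ideal.span_singleton_eq_top.mpr ha)
  · intro u v huv
    have h : Ideal.span {u} * Ideal.span {v} = I := by
      rw [Ideal.span_singleton_mul_span_singleton, ← huv, hI]
    rcases hkey _ _ ⟨u, rfl⟩ ⟨v, rfl⟩ h with h' | h'
    · exact Or.inl (Ideal.span_singleton_eq_top.mp h')
    · exact Or.inr (Ideal.span_singleton_eq_top.mp h')

open Classical in
/-- weight of an ideal: principal primes count 2, nonprincipal count 1. -/
noncomputable def wt (I : Ideal R) : ℕ :=
  ((normalizedFactors I).map (fun P => if P.IsPrincipal then 2 else 1)).sum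

lemma wt_mul {I J : Ideal R} (hI : I ≠ 0) (hJ : J ≠ 0) : wt (I * J) = wt I + wt J := by
  rw [wt, normalizedFactors_mul hI hJ, Multiset.map_add, Multiset.sum_add]; rfl

lemma wt_one : wt (1 : Ideal R) = 0 := by
  rw [wt, normalizedFactors_one]; rfl


end CarlitzAux

namespace CarlitzAux

variable {R : Type*} [CommRing R] [IsDomain R] [IsDedekindDomain R]

lemma cls_congr {I J : Ideal R} (h : I = J) (hI : I ≠ 0) (hJ : J ≠ 0) :
    cls I hI = cls J hJ := by subst h; rfl

lemma wt_irred (hcov : ∀ g h : ClassGroup R, g ≠ 1 → h ≠ 1 → g * h = 1)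
    {a : R} (ha : Irreducible a) : wt (Ideal.span {a}) = 2 := by
  classical
  set I := Ideal.span ({a} : Set R) with hIdef
  have hI0 : I ≠ 0 := by
    simpa [hIdef, Ideal.zero_eq_bot, Ideal.span_singleton_eq_bot] using ha.ne_zero
  have hItop : I ≠ ⊤ := by
    simpa [hIdef, Ideal.span_singleton_eq_top] using ha.not_isUnit
  have hMprod : (normalizedFactors I).prod = I :=
    associated_iff_eq.mp (prod_normalizedFactors hI0)
  by_cases hex : ∃ P ∈ normalizedFactors I, P.IsPrincipal
  · obtain ⟨P, hPM, hPp⟩ := hex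
    obtain ⟨π, hπ⟩ := hPp.principal
    have hPprime : Prime P := prime_of_normalized_factor P hPM
    have hπ' : P = Ideal.span {π} := by rw [hπ, Ideal.submodule_span_eq]
    have hπ0 : π ≠ 0 := by
      rintro rfl
      exact hPprime.ne_zero (by rw [hπ']; simp)
    have hπprime : Prime π := by
      rw [← Ideal.span_singleton_prime hπ0, ← hπ']
      exact (Ideal.prime_iff_isPrime hPprime.ne_zero).mp hPprime
    have hdvd : π ∣ a := by
      have hd : P ∣ I := dvd_of_mem_normalizedFactors hPM
      rw [hπ', hIdef, Ideal.dvd_span_singleton, Ideal.mem_span_singleton] at hd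
      exact hd
    have hassoc : Associated π a := hπprime.irreducible.associated_of_dvd ha hdvd
    have hIP : I = P := by
      rw [hIdef, hπ', ← Ideal.span_singleton_eq_span_singleton.mpr hassoc]
    have hfac : normalizedFactors I = {P} := by
      rw [hIP, normalizedFactors_irreducible hPprime.irreducible, normalize_eq]
    rw [wt, hfac]
    simp [hPp]
  · push_neg at hex
    have hwt : wt I = Multiset.card (normalizedFactors I) := by
      rw [wt, Multiset.map_congr rfl (fun P hP => if_neg (hex P hP))]
      simp
    have hM0 : normalizedFactors I ≠ 0 := by
      intro h0
      rw [h0, Multiset.prod_zero] at hMprod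
      exact hItop (by rw [← hMprod, Ideal.one_eq_top])
    obtain ⟨P, hPM⟩ := Multiset.exists_mem_of_ne_zero hM0
    obtain ⟨M1, hM1⟩ := Multiset.exists_cons_of_mem hPM
    have hPprime : Prime P := prime_of_normalized_factor P hPM
    rcases eq_or_ne M1 0 with h1 | h1
    · exfalso
      rw [hM1, h1, Multiset.prod_cons, Multiset.prod_zero, mul_one] at hMprod
      exact hex P hPM (hMprod ▸ ⟨a, by rw [hIdef, Ideal.submodule_span_eq]⟩)
    obtain ⟨Q, hQM1⟩ := Multiset.exists_mem_of_ne_zero h1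
    obtain ⟨M2, hM2⟩ := Multiset.exists_cons_of_mem hQM1
    have hQM : Q ∈ normalizedFactors I := by rw [hM1]; exact Multiset.mem_cons_of_mem hQM1
    have hQprime : Prime Q := prime_of_normalized_factor Q hQM
    rcases eq_or_ne M2 0 with h2 | h2
    · rw [hwt, hM1, hM2, h2]
      rfl
    · exfalso
      have hM2prime : ∀ X ∈ M2, Prime X := by
        intro X hX
        refine prime_of_normalized_factor (a := I) X ?_
        rw [hM1, hM2]
        exact Multiset.mem_cons_of_mem (Multiset.mem_cons_of_mem hX)
      have hJ0 : M2.prod ≠ 0 :=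
        Multiset.prod_ne_zero (fun h0 => (hM2prime 0 h0).ne_zero rfl)
      have hIJ : I = (P * Q) * M2.prod := by
        rw [← hMprod, hM1, hM2, Multiset.prod_cons, Multiset.prod_cons, mul_assoc]
      have hPQ0 : P * Q ≠ 0 := mul_ne_zero hPprime.ne_zero hQprime.ne_zero
      have hPQcls : cls (P * Q) hPQ0 = 1 := by
        rw [cls_mul P Q hPprime.ne_zero hQprime.ne_zero]
        refine hcov _ _ ?_ ?_
        · exact fun hc => hex P hPM ((cls_eq_one_iff _ _).mp hc)
        · exact fun hc => hex Q hQM ((cls_eq_one_iff _ _).mp hc)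
      have hIcls : cls I hI0 = 1 :=
        (cls_eq_one_iff _ _).mpr ⟨a, by rw [hIdef, Ideal.submodule_span_eq]⟩
      have hJcls : cls M2.prod hJ0 = 1 := by
        have h3 : cls I hI0 = cls (P * Q) hPQ0 * cls M2.prod hJ0 := by
          rw [cls_congr hIJ hI0 (mul_ne_zero hPQ0 hJ0), cls_mul]
        rw [hIcls, hPQcls, one_mul] at h3
        exact h3.symm
      obtain ⟨x, hx⟩ := ((cls_eq_one_iff _ hPQ0).mp hPQcls).principal
      obtain ⟨y, hy⟩ := ((cls_eq_one_iff _ hJ0).mp hJcls).principal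
      have hx' : P * Q = Ideal.span {x} := by rw [hx, Ideal.submodule_span_eq]
      have hy' : M2.prod = Ideal.span {y} := by rw [hy, Ideal.submodule_span_eq]
      have hspan : Ideal.span {a} = Ideal.span {x * y} := by
        rw [← hIdef, hIJ, hx', hy', Ideal.span_singleton_mul_span_singleton]
      have hxy : Irreducible (x * y) :=
        (Ideal.span_singleton_eq_span_singleton.mp hspan).irreducible ha
      rcases hxy.isUnit_or_isUnit rfl with h' | h'
      · have : IsUnit (P * Q) := by
          rw [hx', Ideal.isUnit_iff, Ideal.span_singleton_eq_top]
          exact h'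
        exact hPprime.not_unit (isUnit_of_mul_isUnit_left this)
      · have hJu : IsUnit M2.prod := by
          rw [hy', Ideal.isUnit_iff, Ideal.span_singleton_eq_top]
          exact h'
        obtain ⟨X, hX⟩ := Multiset.exists_mem_of_ne_zero h2
        exact (hM2prime X hX).not_unit
          (isUnit_of_dvd_unit (Multiset.dvd_prod hX) hJu)

lemma wt_prod {ι : Type*} (hcov : ∀ g h : ClassGroup R, g ≠ 1 → h ≠ 1 → g * h = 1)
    (s : Finset ι) (α : ι → R) (h : ∀ i ∈ s, Irreducible (α i)) :
    wt (Ideal.span {∏ i ∈ s, α i}) = 2 * s.card := by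
  classical
  induction s using Finset.cons_induction with
  | empty => simp [Ideal.span_singleton_one, ← Ideal.one_eq_top, wt_one]
  | cons i s his ih =>
    have hne : (∏ j ∈ s, α j) ≠ 0 :=
      Finset.prod_ne_zero_iff.mpr (fun j hj => (h j (Finset.mem_cons_of_mem hj)).ne_zero)
    have hi : Irreducible (α i) := h i (Finset.mem_cons_self i s)
    rw [Finset.prod_cons, ← Ideal.span_singleton_mul_span_singleton,
      wt_mul (by simpa [Ideal.zero_eq_bot, Ideal.span_singleton_eq_bot] using hi.ne_zero)
        (by simpa [Ideal.zero_eq_bot, Ideal.span_singleton_eq_bot] using hne),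
      wt_irred hcov hi, ih (fun j hj => h j (Finset.mem_cons_of_mem hj)), Finset.card_cons]
    ring

lemma gen2 (P Q : Ideal R) (hP0 : P ≠ 0) (hQ0 : Q ≠ 0) (hP : Prime P) (hQ : Prime Q)
    (hP1 : cls P hP0 ≠ 1) (hQ1 : cls Q hQ0 ≠ 1) (hmul : cls P hP0 * cls Q hQ0 = 1) :
    ∃ x : R, Ideal.span {x} = P * Q ∧ Irreducible x := by
  have hprinc : (P * Q).IsPrincipal := by
    rw [← cls_eq_one_iff _ (mul_ne_zero hP0 hQ0), cls_mul _ _ hP0 hQ0, hmul]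
  obtain ⟨x, hx⟩ := hprinc.principal
  have hx' : Ideal.span {x} = P * Q := by rw [hx, Ideal.submodule_span_eq]
  refine ⟨x, hx', irred_of_span_eq hx' ?_ (fun U V hU hV hUV =>
    key2 hP hQ (fun hp => hP1 ((cls_eq_one_iff _ _).mpr hp))
      (fun hp => hQ1 ((cls_eq_one_iff _ _).mpr hp)) hU hV hUV)⟩
  intro htop
  exact hP.not_unit (isUnit_of_mul_isUnit_left (Ideal.isUnit_iff.mpr htop))

lemma gen3 (P Q S : Ideal R) (hP0 : P ≠ 0) (hQ0 : Q ≠ 0) (hS0 : S ≠ 0)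
    (hP : Prime P) (hQ : Prime Q) (hS : Prime S)
    (hP1 : cls P hP0 ≠ 1) (hQ1 : cls Q hQ0 ≠ 1) (hS1 : cls S hS0 ≠ 1)
    (hmul : cls P hP0 * cls Q hQ0 * cls S hS0 = 1) :
    ∃ x : R, Ideal.span {x} = P * Q * S ∧ Irreducible x := by
  have hprinc : (P * Q * S).IsPrincipal := by
    rw [← cls_eq_one_iff _ (mul_ne_zero (mul_ne_zero hP0 hQ0) hS0),
      cls_mul _ _ (mul_ne_zero hP0 hQ0) hS0, cls_mul _ _ hP0 hQ0, hmul]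
  obtain ⟨x, hx⟩ := hprinc.principal
  have hx' : Ideal.span {x} = P * Q * S := by rw [hx, Ideal.submodule_span_eq]
  refine ⟨x, hx', irred_of_span_eq hx' ?_ (fun U V hU hV hUV =>
    key3 hP hQ hS (fun hp => hP1 ((cls_eq_one_iff _ _).mpr hp))
      (fun hp => hQ1 ((cls_eq_one_iff _ _).mpr hp))
      (fun hp => hS1 ((cls_eq_one_iff _ _).mpr hp)) hU hV hUV)⟩
  intro htop
  exact hP.not_unit (isUnit_of_mul_isUnit_left
    (isUnit_of_mul_isUnit_left (Ideal.isUnit_iff.mpr htop)))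

end CarlitzAux

open CarlitzAux in
theorem carlitz_half_factorial_iff_class_number_le_two
    {R : Type*} [CommRing R] [IsDomain R] [IsDedekindDomain R]
    (hprimes : ∀ c : ClassGroup R, ∃ (𝔭 : Ideal R) (h𝔭 : 𝔭 ∈ nonZeroDivisors (Ideal R)),
      𝔭.IsPrime ∧ 𝔭 ≠ ⊥ ∧ ClassGroup.mk0 ⟨𝔭, h𝔭⟩ = c) :
    (∀ (n m : ℕ) (α : Fin n → R) (β : Fin m → R),
        (∀ i, Irreducible (α i)) → (∀ j, Irreducible (β j)) →
        ∏ i, α i = ∏ j, β j → n = m) ↔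
      ∃ a b : ClassGroup R, ∀ g : ClassGroup R, g = a ∨ g = b := by
  constructor
  · intro H
    by_contra hcov
    push_neg at hcov
    obtain ⟨g, hg1, -⟩ := hcov 1 1
    obtain ⟨h, hh1, hhg⟩ := hcov 1 g
    have getp : ∀ c : ClassGroup R, ∃ P : Ideal R, ∃ hP : P ≠ 0, Prime P ∧ cls P hP = c := by
      intro c
      obtain ⟨𝔭, h𝔭, hpr, hne, hmk⟩ := hprimes c
      have h0 : 𝔭 ≠ 0 := by rwa [Ideal.zero_eq_bot]
      exact ⟨𝔭, h0, (Ideal.prime_iff_isPrime hne).mpr hpr, hmk⟩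
    by_cases hgh : g * h = 1
    · -- h = g⁻¹ and g ≠ h, so g * g ≠ 1
      have hg2 : g * g ≠ 1 := by
        intro h2
        apply hhg
        have hinv : h = g⁻¹ := eq_inv_of_mul_eq_one_right hgh
        rw [hinv, inv_eq_of_mul_eq_one_right h2]
      have hgi1 : g⁻¹ ≠ 1 := fun h' => hg1 (by rwa [inv_eq_one] at h')
      have hg2i1 : (g * g)⁻¹ ≠ 1 := fun h' => hg2 (by rwa [inv_eq_one] at h')
      obtain ⟨P, hP0, hPpr, hPc⟩ := getp g
      obtain ⟨Q, hQ0, hQpr, hQc⟩ := getp g⁻¹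
      obtain ⟨P₂, hP₂0, hP₂pr, hP₂c⟩ := getp (g * g)
      obtain ⟨Q₂, hQ₂0, hQ₂pr, hQ₂c⟩ := getp (g * g)⁻¹
      obtain ⟨x, hxspan, hxirr⟩ := gen2 P Q hP0 hQ0 hPpr hQpr
        (by rw [hPc]; exact hg1) (by rw [hQc]; exact hgi1) (by rw [hPc, hQc]; simp [mul_comm, mul_left_comm, mul_assoc])
      obtain ⟨y, hyspan, hyirr⟩ := gen2 P₂ Q₂ hP₂0 hQ₂0 hP₂pr hQ₂pr
        (by rw [hP₂c]; exact hg2) (by rw [hQ₂c]; exact hg2i1) (by rw [hP₂c, hQ₂c]; simp [mul_comm, mul_left_comm, mul_assoc])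
      obtain ⟨z, hzspan, hzirr⟩ := gen3 P P Q₂ hP0 hP0 hQ₂0 hPpr hPpr hQ₂pr
        (by rw [hPc]; exact hg1) (by rw [hPc]; exact hg1) (by rw [hQ₂c]; exact hg2i1)
        (by rw [hPc, hQ₂c]; simp [mul_comm, mul_left_comm, mul_assoc])
      obtain ⟨w, hwspan, hwirr⟩ := gen3 Q Q P₂ hQ0 hQ0 hP₂0 hQpr hQpr hP₂pr
        (by rw [hQc]; exact hgi1) (by rw [hQc]; exact hgi1) (by rw [hP₂c]; exact hg2)
        (by rw [hQc, hP₂c]; simp [mul_comm, mul_left_comm, mul_assoc])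
      have hprodspan : Ideal.span {x * x * y} = Ideal.span {z * w} := by
        rw [← Ideal.span_singleton_mul_span_singleton, ← Ideal.span_singleton_mul_span_singleton,
          ← Ideal.span_singleton_mul_span_singleton, hxspan, hyspan, hzspan, hwspan]
        ring
      obtain ⟨u, hu⟩ := Ideal.span_singleton_eq_span_singleton.mp hprodspan
      have := H 3 2 ![x, x, y * u] ![z, w]
        (by intro i; fin_cases i
            · exact hxirr
            · exact hxirr
            · exact (Associated.irreducible ⟨u, rfl⟩ hyirr))
        (by intro j; fin_cases j
            · exact hzirr
            · exact hwirr)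
        (by rw [Fin.prod_univ_three, Fin.prod_univ_two]
            simp only [Matrix.cons_val_zero, Matrix.cons_val_one, Matrix.head_cons,
              Matrix.cons_val_two, Matrix.tail_cons]
            rw [← mul_assoc]
            exact hu)
      omega
    · have hghi1 : (g * h)⁻¹ ≠ 1 := fun h' => hgh (by rwa [inv_eq_one] at h')
      have hgi1 : g⁻¹ ≠ 1 := fun h' => hg1 (by rwa [inv_eq_one] at h')
      have hhi1 : h⁻¹ ≠ 1 := fun h' => hh1 (by rwa [inv_eq_one] at h')
      obtain ⟨P, hP0, hPpr, hPc⟩ := getp g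
      obtain ⟨Q, hQ0, hQpr, hQc⟩ := getp h
      obtain ⟨S, hS0, hSpr, hSc⟩ := getp (g * h)⁻¹
      obtain ⟨P', hP'0, hP'pr, hP'c⟩ := getp g⁻¹
      obtain ⟨Q', hQ'0, hQ'pr, hQ'c⟩ := getp h⁻¹
      obtain ⟨S', hS'0, hS'pr, hS'c⟩ := getp (g * h)
      obtain ⟨a, haspan, hairr⟩ := gen3 P Q S hP0 hQ0 hS0 hPpr hQpr hSpr
        (by rw [hPc]; exact hg1) (by rw [hQc]; exact hh1) (by rw [hSc]; exact hghi1)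
        (by rw [hPc, hQc, hSc]; simp [mul_comm, mul_left_comm, mul_assoc])
      obtain ⟨a', ha'span, ha'irr⟩ := gen3 P' Q' S' hP'0 hQ'0 hS'0 hP'pr hQ'pr hS'pr
        (by rw [hP'c]; exact hgi1) (by rw [hQ'c]; exact hhi1) (by rw [hS'c]; exact hgh)
        (by rw [hP'c, hQ'c, hS'c]; simp [mul_comm, mul_left_comm, mul_assoc])
      obtain ⟨b, hbspan, hbirr⟩ := gen2 P P' hP0 hP'0 hPpr hP'pr
        (by rw [hPc]; exact hg1) (by rw [hP'c]; exact hgi1) (by rw [hPc, hP'c]; simp [mul_comm, mul_left_comm, mul_assoc])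
      obtain ⟨c, hcspan, hcirr⟩ := gen2 Q Q' hQ0 hQ'0 hQpr hQ'pr
        (by rw [hQc]; exact hh1) (by rw [hQ'c]; exact hhi1) (by rw [hQc, hQ'c]; simp [mul_comm, mul_left_comm, mul_assoc])
      obtain ⟨d, hdspan, hdirr⟩ := gen2 S S' hS0 hS'0 hSpr hS'pr
        (by rw [hSc]; exact hghi1) (by rw [hS'c]; exact hgh) (by rw [hSc, hS'c]; simp [mul_comm, mul_left_comm, mul_assoc])
      have hprodspan : Ideal.span {b * c * d} = Ideal.span {a * a'} := by
        rw [← Ideal.span_singleton_mul_span_singleton, ← Ideal.span_singleton_mul_span_singleton,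
          ← Ideal.span_singleton_mul_span_singleton, hbspan, hcspan, hdspan, haspan, ha'span]
        ring
      obtain ⟨u, hu⟩ := Ideal.span_singleton_eq_span_singleton.mp hprodspan
      have := H 3 2 ![b, c, d * u] ![a, a']
        (by intro i; fin_cases i
            · exact hbirr
            · exact hcirr
            · exact (Associated.irreducible ⟨u, rfl⟩ hdirr))
        (by intro j; fin_cases j
            · exact hairr
            · exact ha'irr)
        (by rw [Fin.prod_univ_three, Fin.prod_univ_two]
            simp only [Matrix.cons_val_zero, Matrix.cons_val_one, Matrix.head_cons,
              Matrix.cons_val_two, Matrix.tail_cons]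
            rw [← mul_assoc]
            exact hu)
      omega
  · rintro ⟨A, B, hAB⟩ n m α β hα hβ heq
    have hcov : ∀ gg hh : ClassGroup R, gg ≠ 1 → hh ≠ 1 → gg * hh = 1 := by
      have hC : ∃ C : ClassGroup R, ∀ g : ClassGroup R, g = 1 ∨ g = C := by
        rcases hAB 1 with h1 | h1
        · refine ⟨B, fun g => ?_⟩
          rcases hAB g with h | h
          · exact Or.inl (by rw [h, ← h1])
          · exact Or.inr h
        · refine ⟨A, fun g => ?_⟩
          rcases hAB g with h | h
          · exact Or.inr h
          · exact Or.inl (by rw [h, ← h1])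
      obtain ⟨C, hC⟩ := hC
      intro gg hh hgg hhh
      rw [(hC gg).resolve_left hgg, (hC hh).resolve_left hhh]
      rcases hC (C * C) with h | h
      · exact h
      · exfalso
        exact hgg (((hC gg).resolve_left hgg).trans (mul_eq_right.mp h))
    have h1 := wt_prod hcov Finset.univ α (fun i _ => hα i)
    have h2 := wt_prod hcov Finset.univ β (fun j _ => hβ j)
    rw [heq] at h1
    rw [h1] at h2
    simp only [Finset.card_univ, Fintype.card_fin] at h2
    omega
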